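/- For 0 < d < 1/2, the integral ∫_0^∞ ((1+x)^d − x^d)^3 dx is finite. -/

import Mathlib

open MeasureTheory Set

namespace Real

variable {d x : ℝ}

theorem continuous_one_add_rpow_sub_rpow (hd : 0 ≤ d) :
    Continuous fun x : ℝ => (1 + x) ^ d - x ^ d :=
  have hpow : Continuous fun x : ℝ => x ^ d := continuous_rpow_const hd
  (hpow.comp (continuous_const.add continuous_id)).sub hpow

theorem one_add_rpow_sub_rpow_nonneg (hd : 0 ≤ d) (hx : 0 ≤ x) : 0 ≤ (1 + x) ^ d - x ^ d :=
  sub_nonneg.2 <| rpow_le_rpow hx (by linarith) hd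

/-- Bernoulli's inequality applied to `(1 + x) ^ d = x ^ d * (1 + 1 / x) ^ d`. -/
theorem one_add_rpow_sub_rpow_le (hd0 : 0 ≤ d) (hd1 : d ≤ 1) (hx : 0 < x) :
    (1 + x) ^ d - x ^ d ≤ d * x ^ (d - 1) := by
  have hfactor : (1 + x) ^ d = x ^ d * (1 + 1 / x) ^ d := by
    rw [← mul_rpow hx.le (by positivity)]
    congr 1
    field_simp
    ring
  have hbernoulli : (1 + 1 / x) ^ d ≤ 1 + d * (1 / x) :=
    rpow_one_add_le_one_add_mul_self (by linarith [one_div_pos.2 hx]) hd0 hd1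
  have hpow : x ^ d * (1 / x) = x ^ (d - 1) := by
    rw [rpow_sub hx, rpow_one, mul_one_div]
  calc (1 + x) ^ d - x ^ d
      ≤ x ^ d * (1 + d * (1 / x)) - x ^ d := by
        rw [hfactor]
        gcongr
    _ = d * x ^ (d - 1) := by rw [← hpow]; ring

theorem pow_one_add_rpow_sub_rpow_le (n : ℕ) (hd0 : 0 ≤ d) (hd1 : d ≤ 1) (hx : 0 < x) :
    ((1 + x) ^ d - x ^ d) ^ n ≤ d ^ n * x ^ (n * (d - 1)) := by
  calc ((1 + x) ^ d - x ^ d) ^ n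
      ≤ (d * x ^ (d - 1)) ^ n :=
        pow_le_pow_left₀ (one_add_rpow_sub_rpow_nonneg hd0 hx.le)
          (one_add_rpow_sub_rpow_le hd0 hd1 hx) n
    _ = d ^ n * x ^ (n * (d - 1)) := by
        rw [mul_pow, ← rpow_natCast (x ^ (d - 1)), ← rpow_mul hx.le, mul_comm (d - 1)]

/-- The integrand is continuous on `[0, 1]` and is `O(x ^ (n * (d - 1)))` at infinity. -/
theorem integrableOn_Ioi_pow_one_add_rpow_sub_rpow (n : ℕ) (hd0 : 0 ≤ d)
    (hd : n * (d - 1) < -1) :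
    IntegrableOn (fun x : ℝ => ((1 + x) ^ d - x ^ d) ^ n) (Ioi 0) := by
  have hd1 : d ≤ 1 := by
    by_contra! h
    nlinarith [n.cast_nonneg (α := ℝ)]
  have hcont : Continuous fun x : ℝ => ((1 + x) ^ d - x ^ d) ^ n :=
    (continuous_one_add_rpow_sub_rpow hd0).pow n
  have hnear : IntegrableOn (fun x : ℝ => ((1 + x) ^ d - x ^ d) ^ n) (Ioc 0 1) :=
    (hcont.continuousOn.integrableOn_Icc).mono_set Ioc_subset_Icc_self
  have hfar : IntegrableOn (fun x : ℝ => ((1 + x) ^ d - x ^ d) ^ n) (Ioi 1) := by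
    refine ((integrableOn_Ioi_rpow_of_lt hd one_pos).const_mul (d ^ n)).mono'
      hcont.aestronglyMeasurable.restrict ?_
    filter_upwards [ae_restrict_mem measurableSet_Ioi] with x hx
    have hx0 : 0 < x := one_pos.trans hx
    rw [norm_of_nonneg (pow_nonneg (one_add_rpow_sub_rpow_nonneg hd0 hx0.le) n)]
    exact pow_one_add_rpow_sub_rpow_le n hd0 hd1 hx0
  rw [← Ioc_union_Ioi_eq_Ioi zero_le_one]
  exact hnear.union hfar

end Real

/-- For `0 < d < 1/2`, the integral `∫_0^∞ ((1+x)^d − x^d)^3 dx` is finite. -/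
theorem integrable_cube_diff_rpow (d : ℝ) (hd0 : 0 < d) (hd : d < 1 / 2) :
    MeasureTheory.IntegrableOn (fun x : ℝ => ((1 + x) ^ d - x ^ d) ^ 3) (Set.Ioi 0) :=
  Real.integrableOn_Ioi_pow_one_add_rpow_sub_rpow 3 hd0.le (by norm_num; linarith)
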